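/- Let π^ε be a clean compact peg permutation of length n that does not end with its maximum value n. Then prd(π^ε) ≥ n. -/
import Mathlib


/-! ## Basic definitions: permutations as lists, reversals, distances -/

/-- Decorations for peg permutations: `+`, `-`, `•`. -/
inductive Deco where
  | plus : Deco
  | minus : Deco
  | dot : Deco
deriving DecidableEq, Repr

/-- A peg permutation: a list of entries together with decorations. -/
abbrev PegPerm := List (ℕ × Deco)

def pegDefault : ℕ × Deco := (0, Deco.dot)

/-- The identity permutation `1 2 ⋯ n` as a list. -/
def idPerm (n : ℕ) : List ℕ := List.range' 1 n

/-- A list of naturals is a permutation (of `1,…,n` where `n` is its length). -/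
def IsPermList (π : List ℕ) : Prop := π.Perm (idPerm π.length)

/-- Reverse the segment of a list from (0-indexed) position `i` to `j` inclusive. -/
def segReverse {α : Type*} (l : List α) (i j : ℕ) : List α :=
  l.take i ++ ((l.drop i).take (j + 1 - i)).reverse ++ l.drop (j + 1)

/-- One reversal step on permutations (reverse a segment of length at least 2). -/
def RevStep (l l' : List ℕ) : Prop :=
  ∃ i j, i < j ∧ j < l.length ∧ l' = segReverse l i j

/-- One prefix reversal step on permutations (reverse a prefix of length at least 2). -/
def PrefRevStep (l l' : List ℕ) : Prop :=
  ∃ j, 0 < j ∧ j < l.length ∧ l' = segReverse l 0 j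

/-- Reachability in exactly `k` steps of the step relation `step`. -/
def ReachIn {α : Type*} (step : α → α → Prop) : ℕ → α → α → Prop
  | 0, x, y => x = y
  | k + 1, x, y => ∃ z, step x z ∧ ReachIn step k z y

/-- The reversal distance of a permutation from the identity. -/
noncomputable def rd (π : List ℕ) : ℕ :=
  sInf {k | ReachIn RevStep k π (idPerm π.length)}

/-- The prefix reversal distance of a permutation from the identity. -/
noncomputable def prd (π : List ℕ) : ℕ :=
  sInf {k | ReachIn PrefRevStep k π (idPerm π.length)}

/-- The ball of radius `k` in the reversal model. -/
def Brd (k : ℕ) : Set (List ℕ) := {π | IsPermList π ∧ rd π ≤ k}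

/-- The ball of radius `k` in the prefix reversal model. -/
def Bprd (k : ℕ) : Set (List ℕ) := {π | IsPermList π ∧ prd π ≤ k}

/-! ## Peg permutations: oriented reversals and distances -/

def flipDeco : Deco → Deco
  | Deco.plus => Deco.minus
  | Deco.minus => Deco.plus
  | Deco.dot => Deco.dot

/-- Oriented reversal of the segment from position `i` to `j` (0-indexed) of a peg
permutation: the segment is reversed and the decorations `+`, `-` are swapped. -/
def pegSegReverse (l : PegPerm) (i j : ℕ) : PegPerm :=
  l.take i ++ (((l.drop i).take (j + 1 - i)).map (fun p => (p.1, flipDeco p.2))).reverse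
    ++ l.drop (j + 1)

/-- One oriented reversal step on peg permutations. -/
def PegRevStep (l l' : PegPerm) : Prop :=
  ∃ i j, i ≤ j ∧ j < l.length ∧ l' = pegSegReverse l i j

/-- One oriented prefix reversal step on peg permutations. -/
def PegPrefRevStep (l l' : PegPerm) : Prop :=
  ∃ j, j < l.length ∧ l' = pegSegReverse l 0 j

/-- The underlying list of a peg permutation is a permutation. -/
def IsPegPermList (l : PegPerm) : Prop := IsPermList (l.map Prod.fst)

/-- An identity peg permutation: underlying identity, every decoration `+` or `•`. -/
def IsIdPeg (l : PegPerm) : Prop :=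
  l.map Prod.fst = idPerm l.length ∧ ∀ p ∈ l, p.2 ≠ Deco.minus

/-- The reversal distance of a peg permutation from an identity peg permutation. -/
noncomputable def pegRd (l : PegPerm) : ℕ :=
  sInf {k | ∃ m, IsIdPeg m ∧ ReachIn PegRevStep k l m}

/-- The prefix reversal distance of a peg permutation from an identity peg permutation. -/
noncomputable def pegPrd (l : PegPerm) : ℕ :=
  sInf {k | ∃ m, IsIdPeg m ∧ ReachIn PegPrefRevStep k l m}

/-- The ball of radius `k` of peg permutations in the reversal model. -/
def PegBrd (k : ℕ) : Set PegPerm := {l | IsPegPermList l ∧ pegRd l ≤ k}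

/-- The ball of radius `k` of peg permutations in the prefix reversal model. -/
def PegBprd (k : ℕ) : Set PegPerm := {l | IsPegPermList l ∧ pegPrd l ≤ k}

/-! ## Patterns -/

/-- Two lists of the same length are order-isomorphic. -/
def OrderIsoList (s t : List ℕ) : Prop :=
  s.length = t.length ∧
  ∀ i j, i < s.length → j < s.length → (s.getD i 0 < s.getD j 0 ↔ t.getD i 0 < t.getD j 0)

/-- `σ` is a (classical) pattern of `τ`. -/
def IsPattern (σ τ : List ℕ) : Prop :=
  ∃ s, s.Sublist τ ∧ OrderIsoList s σ

/-- `σ` is a peg pattern of `τ`: some subsequence of `τ` is order-isomorphic to `σ`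
and whenever an entry of the subsequence is decorated `+` (resp. `-`), the
corresponding entry of `σ` is decorated `+` (resp. `-`). -/
def IsPegPattern (σ τ : PegPerm) : Prop :=
  ∃ s : PegPerm, s.Sublist τ ∧ OrderIsoList (s.map Prod.fst) (σ.map Prod.fst) ∧
    ∀ i, i < s.length →
      ((s.getD i pegDefault).2 = Deco.plus → (σ.getD i pegDefault).2 = Deco.plus) ∧
      ((s.getD i pegDefault).2 = Deco.minus → (σ.getD i pegDefault).2 = Deco.minus)

/-! ## Strips, clean compact and compact peg permutations -/

/-- Two adjacent entries of a peg permutation lie in a common strip. -/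
def StripPair (p q : ℕ × Deco) : Prop :=
  (q.1 = p.1 + 1 ∧ p.2 ≠ Deco.minus ∧ q.2 ≠ Deco.minus) ∨
  (p.1 = q.1 + 1 ∧ p.2 ≠ Deco.plus ∧ q.2 ≠ Deco.plus)

/-- A peg permutation is clean compact when all its strips have length 1, i.e. no two
adjacent entries lie in a common strip. -/
def CleanCompact (l : PegPerm) : Prop :=
  ∀ i, i + 1 < l.length → ¬ StripPair (l.getD i pegDefault) (l.getD (i + 1) pegDefault)

/-- A peg permutation is compact when every strip has length 1 or consists
exclusively of entries decorated `•`. -/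
def CompactPeg (l : PegPerm) : Prop :=
  ∀ i, i + 1 < l.length → StripPair (l.getD i pegDefault) (l.getD (i + 1) pegDefault) →
    (l.getD i pegDefault).2 = Deco.dot ∧ (l.getD (i + 1) pegDefault).2 = Deco.dot

/-! ## The clean compact peg permutation `peg(γ)` associated with a permutation -/

/-- The decomposition of a permutation into maximal monotone strips of adjacent values. -/
def stripGroups (γ : List ℕ) : List (List ℕ) :=
  γ.splitBy (fun a b => b == a + 1 || a == b + 1)

def stripMin (s : List ℕ) : ℕ := s.foldr min (s.headD 0)

def stripDeco (s : List ℕ) : Deco :=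
  if s.length ≤ 1 then Deco.dot
  else if s.headD 0 < s.getLastD 0 then Deco.plus
  else Deco.minus

/-- Rank of `v` among `vals` (used for rescaling). -/
def rankIn (vals : List ℕ) (v : ℕ) : ℕ := (vals.filter (fun w => w ≤ v)).length

/-- The clean compact peg permutation associated with a permutation: replace each
strip by its minimum, decorated `+`/`-`/`•` according to the kind of strip, and rescale. -/
def pegOf (γ : List ℕ) : PegPerm :=
  (stripGroups γ).map (fun s => (rankIn ((stripGroups γ).map stripMin) (stripMin s), stripDeco s))

/-! ## Monotone inflations and grid classes -/

/-- A legal inflation vector for a peg permutation. -/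
def LegalVec (πε : PegPerm) (v : List ℕ) : Prop :=
  v.length = πε.length ∧
  ∀ i, i < πε.length → (πε.getD i pegDefault).2 = Deco.dot → v.getD i 0 ≤ 1

/-- The values of the `i`-th block of the monotone inflation of `πε` through `v`:
an increasing (resp. decreasing) run of `vᵢ` values, occupying the interval of values
determined by the relative order of the entries of `πε`. -/
def blockVals (πε : PegPerm) (v : List ℕ) (i : ℕ) : List ℕ :=
  let off := (((List.range πε.length).filter
      (fun j => (πε.getD j pegDefault).1 < (πε.getD i pegDefault).1)).map
      (fun j => v.getD j 0)).sum
  if (πε.getD i pegDefault).2 = Deco.minus then (List.range' (off + 1) (v.getD i 0)).reverse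
  else List.range' (off + 1) (v.getD i 0)

/-- The monotone inflation `πε[v]`. -/
def inflate (πε : PegPerm) (v : List ℕ) : List ℕ :=
  ((List.range πε.length).map (blockVals πε v)).flatten

/-- The grid class of a peg permutation: all its monotone inflations through legal
inflation vectors. -/
def GridOf (πε : PegPerm) : Set (List ℕ) :=
  {γ | ∃ v, LegalVec πε v ∧ γ = inflate πε v}

/-- Compatibility of decorations in peg monotone inflations: a `+` entry is inflated by
an identity peg permutation (decorations `+`/`•`), a `-` entry by a reverse identity peg
permutation (decorations `-`/`•`), a `•` entry stays `•`. -/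
def DecoOK : Deco → Deco → Prop
  | Deco.plus, d => d ≠ Deco.minus
  | Deco.minus, d => d ≠ Deco.plus
  | Deco.dot, d => d = Deco.dot

/-- The peg grid class of a peg permutation: all its peg monotone inflations. -/
def GridPegOf (πε : PegPerm) : Set PegPerm :=
  {γ | ∃ v, LegalVec πε v ∧ ∃ bs : List PegPerm,
    bs.length = πε.length ∧ γ = bs.flatten ∧
    ∀ i, i < πε.length →
      (bs.getD i []).map Prod.fst = blockVals πε v i ∧
      ∀ p ∈ bs.getD i [], DecoOK (πε.getD i pegDefault).2 p.2}

/-! ## The inflation `π^ε_I` and the permutation `π̃^ε_I` -/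

/-- Canonical peg inflation: every inflated entry keeps the decoration of the
original one. -/
def pegInflate (πε : PegPerm) (v : List ℕ) : PegPerm :=
  ((List.range πε.length).map
    (fun i => (blockVals πε v i).map (fun x => (x, (πε.getD i pegDefault).2)))).flatten

/-- The inflation vector associated with the multiset `I = {i, j}` (0-indexed):
entries `i` and `j` are inflated by one more element each. -/
def inflVec (n i j : ℕ) : List ℕ :=
  (List.range n).map (fun l => 1 + (if l = i then 1 else 0) + (if l = j then 1 else 0))

/-- `π^ε_I` where `I = {i, j}` with `i ≤ j` 0-indexed. -/
def pegI (πε : PegPerm) (i j : ℕ) : PegPerm := pegInflate πε (inflVec πε.length i j)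

/-- `π̃^ε_I`: the result of applying to `π^ε_I` the oriented reversal of the segment
of (0-indexed) positions `i+1, …, j+1`. -/
def pegITilde (πε : PegPerm) (i j : ℕ) : PegPerm := pegSegReverse (pegI πε i j) (i + 1) (j + 1)

/-! ## Clean compact peg bases -/

/-- The clean compact peg basis of a set `B` of peg permutations: the clean compact
peg permutations not in `B` all of whose proper clean compact peg patterns are in `B`. -/
def CCPegBasis (B : Set PegPerm) : Set PegPerm :=
  {πε | IsPegPermList πε ∧ CleanCompact πε ∧ πε ∉ B ∧
    ∀ γ, IsPegPermList γ → CleanCompact γ → IsPegPattern γ πε → γ ≠ πε → γ ∈ B}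

/-! ## The exceptional peg permutations for the prefix reversal model -/

/-- `Θ_e(n)` for even `n`:  `n• (n−2)• ⋯ 4• 2• 1⁺ 3• ⋯ (n−3)• (n−1)•`. -/
def ThetaE (n : ℕ) : PegPerm :=
  ((List.range (n / 2)).map (fun i => (n - 2 * i, Deco.dot))) ++ [(1, Deco.plus)] ++
  ((List.range (n / 2 - 1)).map (fun i => (3 + 2 * i, Deco.dot)))

/-- `Θ_o(n)` for odd `n`:  `n• (n−2)• ⋯ 3• 1⁻ 2• 4• ⋯ (n−3)• (n−1)•`. -/
def ThetaO (n : ℕ) : PegPerm :=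
  ((List.range ((n - 1) / 2)).map (fun i => (n - 2 * i, Deco.dot))) ++ [(1, Deco.minus)] ++
  ((List.range ((n - 1) / 2)).map (fun i => (2 + 2 * i, Deco.dot)))

/-- `Λ_e(n)` for even `n` and `t = n/2`:  `(t+1)⁺ t• (t+2)• (t−1)• ⋯ (n−1)• 2• n• 1•`. -/
def LambdaE (n : ℕ) : PegPerm :=
  (List.range (n / 2)).flatMap
    (fun i => [(n / 2 + 1 + i, if i = 0 then Deco.plus else Deco.dot), (n / 2 - i, Deco.dot)])

/-- `Λ_o(n)` for odd `n` and `t = (n+1)/2`:  `t⁻ (t+1)• (t−1)• (t+2)• ⋯ (n−1)• 2• n• 1•`. -/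
def LambdaO (n : ℕ) : PegPerm :=
  ((n + 1) / 2, Deco.minus) ::
    (List.range ((n + 1) / 2 - 1)).flatMap
      (fun i => [((n + 1) / 2 + 1 + i, Deco.dot), ((n + 1) / 2 - 1 - i, Deco.dot)])
namespace PrdAux

open Classical

/-- Flip one entry. -/
def flipE (p : ℕ × Deco) : ℕ × Deco := (p.1, flipDeco p.2)

/-- Reverse-and-flip a list. -/
def revflip (l : PegPerm) : PegPerm := (l.map flipE).reverse

noncomputable def bad (p q : ℕ × Deco) : ℕ := if StripPair p q then 0 else 1

noncomputable def badCount : PegPerm → ℕ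
  | p :: q :: rest => bad p q + badCount (q :: rest)
  | _ => 0

noncomputable def junc (s t : PegPerm) : ℕ :=
  match s.getLast?, t.head? with
  | some p, some q => bad p q
  | _, _ => 0

noncomputable def endBad (l : PegPerm) : ℕ :=
  match l.getLast? with
  | some p => if p.1 = l.length ∧ p.2 ≠ Deco.minus then 0 else 1
  | none => 0

noncomputable def Phi (l : PegPerm) : ℕ := badCount l + endBad l

lemma bad_le_one (p q : ℕ × Deco) : bad p q ≤ 1 := by unfold bad; split <;> omega

lemma junc_le_one (s t : PegPerm) : junc s t ≤ 1 := by
  unfold junc; split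
  · exact bad_le_one _ _
  · exact Nat.zero_le _

lemma endBad_le_one (l : PegPerm) : endBad l ≤ 1 := by
  unfold endBad; split
  · split <;> omega
  · exact Nat.zero_le _

lemma junc_nil (t : PegPerm) : junc [] t = 0 := rfl

lemma junc_cons_cons (p q : ℕ × Deco) (s t : PegPerm) :
    junc (p :: q :: s) t = junc (q :: s) t := by
  unfold junc
  rw [List.getLast?_cons_cons]

lemma badCount_append (s t : PegPerm) :
    badCount (s ++ t) = badCount s + junc s t + badCount t := by
  induction s with
  | nil => simp [badCount, junc_nil]
  | cons p s ih =>
    cases s with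
    | nil =>
      cases t with
      | nil => simp [badCount, junc]
      | cons q t => simp [badCount, junc, List.cons_append]
    | cons q s' =>
      have : (p :: q :: s') ++ t = p :: ((q :: s') ++ t) := rfl
      rw [this]
      have h1 : badCount (p :: ((q :: s') ++ t)) = bad p q + badCount ((q :: s') ++ t) := rfl
      rw [h1, ih, junc_cons_cons]
      have h2 : badCount (p :: q :: s') = bad p q + badCount (q :: s') := rfl
      rw [h2]
      ring

lemma stripPair_flip (p q : ℕ × Deco) : StripPair (flipE q) (flipE p) ↔ StripPair p q := by
  rcases p with ⟨a, dp⟩; rcases q with ⟨b, dq⟩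
  cases dp <;> cases dq <;> simp [StripPair, flipE, flipDeco] <;> tauto

lemma bad_flip (p q : ℕ × Deco) : bad (flipE q) (flipE p) = bad p q := by
  unfold bad
  simp [stripPair_flip]

lemma revflip_nil : revflip [] = [] := rfl

lemma revflip_cons (p : ℕ × Deco) (s : PegPerm) :
    revflip (p :: s) = revflip s ++ [flipE p] := by simp [revflip]

lemma revflip_concat (p : ℕ × Deco) (s : PegPerm) :
    revflip (s ++ [p]) = flipE p :: revflip s := by simp [revflip]

lemma length_revflip (s : PegPerm) : (revflip s).length = s.length := by simp [revflip]

lemma map_fst_revflip (s : PegPerm) :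
    (revflip s).map Prod.fst = (s.map Prod.fst).reverse := by
  simp [revflip, flipE, Function.comp]

lemma badCount_revflip (s : PegPerm) : badCount (revflip s) = badCount s := by
  induction s with
  | nil => rfl
  | cons p s ih =>
    rw [revflip_cons, badCount_append]
    cases s with
    | nil => simp [badCount, junc, revflip_nil]
    | cons q s' =>
      have hlast : (revflip (q :: s')).getLast? = some (flipE q) := by
        simp [revflip]
      have hj : junc (revflip (q :: s')) [flipE p] = bad p q := by
        unfold junc
        rw [hlast]
        simp [bad_flip]
      rw [hj, ih]
      have : badCount (p :: q :: s') = bad p q + badCount (q :: s') := rfl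
      rw [this]
      have : badCount [flipE p] = 0 := rfl
      omega

end PrdAux
namespace PrdAux

lemma pegSegReverse_eq (l : PegPerm) (j : ℕ) :
    pegSegReverse l 0 j = revflip (l.take (j + 1)) ++ l.drop (j + 1) := by
  show _ ++ _ ++ _ = _
  simp only [List.take_nil, List.nil_append, List.drop_zero, Nat.sub_zero]
  rfl

lemma length_pegSegReverse (l : PegPerm) (j : ℕ) :
    (pegSegReverse l 0 j).length = l.length := by
  rw [pegSegReverse_eq]
  simp [length_revflip]
  omega

lemma phi_step {l l' : PegPerm} (h : PegPrefRevStep l l') : Phi l ≤ Phi l' + 1 := by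
  obtain ⟨j, hj, rfl⟩ := h
  have hlen := length_pegSegReverse l j
  rw [pegSegReverse_eq] at hlen ⊢
  set a := l.take (j + 1) with ha
  set b := l.drop (j + 1) with hb
  have hl : l = a ++ b := (List.take_append_drop (j + 1) l).symm
  rcases b with _ | ⟨q, b'⟩
  · -- b = [], whole list reversed
    have hl' : l = a := by rw [hl]; simp
    unfold Phi
    rw [List.append_nil, hl']
    rw [badCount_revflip]
    have h1 := endBad_le_one a
    have h2 := endBad_le_one (revflip a)
    omega
  · unfold Phi
    rw [hl, badCount_append, badCount_append, badCount_revflip]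
    have hE : endBad (a ++ q :: b') = endBad (revflip a ++ q :: b') := by
      unfold endBad
      rw [List.getLast?_append_cons, List.getLast?_append_cons]
      have : (a ++ q :: b').length = (revflip a ++ q :: b').length := by
        simp [length_revflip]
      rw [this]
    rw [hE]
    have h1 := junc_le_one a (q :: b')
    have h2 := junc_le_one (revflip a) (q :: b')
    omega

end PrdAux
namespace PrdAux

lemma id_aux : ∀ (m : PegPerm) (s : ℕ), m.map Prod.fst = List.range' s m.length →
    (∀ p ∈ m, p.2 ≠ Deco.minus) →
    badCount m = 0 ∧ ∀ p ∈ m.getLast?, p.1 = s + m.length - 1 := by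
  intro m
  induction m with
  | nil => intro s _ _; exact ⟨rfl, by simp⟩
  | cons p m ih =>
    intro s hmap hdec
    rw [List.length_cons, List.range'_succ] at hmap
    simp only [List.map_cons, List.cons.injEq] at hmap
    obtain ⟨hp1, hm⟩ := hmap
    have hdec' : ∀ q ∈ m, q.2 ≠ Deco.minus := fun q hq => hdec q (List.mem_cons_of_mem _ hq)
    obtain ⟨hbc, hlast⟩ := ih (s + 1) hm hdec'
    rcases m with _ | ⟨q, m'⟩
    · refine ⟨rfl, ?_⟩
      intro r hr
      simp at hr
      subst hr
      simp [hp1]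
    · have hq1 : q.1 = s + 1 := by
        rw [List.length_cons, List.range'_succ] at hm
        simp only [List.map_cons, List.cons.injEq] at hm
        exact hm.1
      constructor
      · have hsp : StripPair p q := by
          left
          exact ⟨by omega, hdec p (by simp), hdec q (by simp)⟩
        have : badCount (p :: q :: m') = bad p q + badCount (q :: m') := rfl
        rw [this, hbc]
        simp [bad, hsp]
      · intro r hr
        rw [List.getLast?_cons_cons] at hr
        have := hlast r hr
        simp only [List.length_cons] at *
        omega

lemma phi_id {m : PegPerm} (hm : IsIdPeg m) : Phi m = 0 := by
  obtain ⟨hmap, hdec⟩ := hm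
  have hmap' : m.map Prod.fst = List.range' 1 m.length := hmap
  obtain ⟨hbc, hlast⟩ := id_aux m 1 hmap' hdec
  unfold Phi endBad
  rw [hbc]
  rcases hel : m.getLast? with _ | p
  · rfl
  · have h1 := hlast p (by rw [hel]; rfl)
    have hne : m ≠ [] := by
      intro h; subst h; simp at hel
    have hlen : 1 ≤ m.length := List.length_pos_iff.mpr hne
    have hcond : p.1 = m.length ∧ p.2 ≠ Deco.minus := by
      constructor
      · omega
      · obtain ⟨hne', heq⟩ := List.mem_getLast?_eq_getLast (by rw [hel]; rfl : p ∈ m.getLast?)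
        exact hdec p (heq ▸ List.getLast_mem hne')
    simp [hcond]

lemma badCount_cleanCompact : ∀ (l : PegPerm), CleanCompact l → badCount l = l.length - 1 := by
  intro l
  induction l with
  | nil => intro _; rfl
  | cons p l ih =>
    intro h
    rcases l with _ | ⟨q, l'⟩
    · rfl
    · have h0 : ¬ StripPair p q := by
        have := h 0 (by simp)
        simpa using this
      have hshift : CleanCompact (q :: l') := by
        intro i hi
        have := h (i + 1) (by simp at hi ⊢; omega)
        simpa using this
      have : badCount (p :: q :: l') = bad p q + badCount (q :: l') := rfl
      rw [this, ih hshift]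
      simp only [bad, if_neg h0, List.length_cons]
      omega

lemma reach_phi_le : ∀ (k : ℕ) (l m : PegPerm),
    ReachIn PegPrefRevStep k l m → IsIdPeg m → Phi l ≤ k := by
  intro k
  induction k with
  | zero =>
    intro l m h hm
    cases h
    rw [phi_id hm]
  | succ k ih =>
    intro l m h hm
    obtain ⟨z, hz, hr⟩ := h
    have := phi_step hz
    have := ih z m hr hm
    omega

end PrdAux
namespace PrdAux

lemma pegSegReverse_prefix_of (a b : PegPerm) (j : ℕ) (h : j + 1 = a.length) :
    pegSegReverse (a ++ b) 0 j = revflip a ++ b := by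
  rw [pegSegReverse_eq, h]
  rw [List.take_left, List.drop_left]

lemma pegSegReverse_append (a t : PegPerm) (j : ℕ) (h : j < a.length) :
    pegSegReverse (a ++ t) 0 j = pegSegReverse a 0 j ++ t := by
  rw [pegSegReverse_eq, pegSegReverse_eq]
  rw [List.take_append_of_le_length (by omega), List.drop_append_of_le_length (by omega)]
  simp [List.append_assoc]

lemma step_append {a b : PegPerm} (t : PegPerm) (h : PegPrefRevStep a b) :
    PegPrefRevStep (a ++ t) (b ++ t) := by
  obtain ⟨j, hj, rfl⟩ := h
  exact ⟨j, by simp; omega, (pegSegReverse_append a t j hj).symm⟩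

lemma reach_append {k : ℕ} {a b : PegPerm} (t : PegPerm)
    (h : ReachIn PegPrefRevStep k a b) :
    ReachIn PegPrefRevStep k (a ++ t) (b ++ t) := by
  induction k generalizing a with
  | zero => cases h; rfl
  | succ k ih =>
    obtain ⟨z, hz, hr⟩ := h
    exact ⟨z ++ t, step_append t hz, ih hr⟩

lemma reach_trans {k₁ k₂ : ℕ} {x y z : PegPerm}
    (h₁ : ReachIn PegPrefRevStep k₁ x y) (h₂ : ReachIn PegPrefRevStep k₂ y z) :
    ReachIn PegPrefRevStep (k₁ + k₂) x z := by
  induction k₁ generalizing x with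
  | zero => cases h₁; simpa using h₂
  | succ k ih =>
    obtain ⟨w, hw, hr⟩ := h₁
    have : k + 1 + k₂ = (k + k₂) + 1 := by omega
    rw [this]
    exact ⟨w, hw, ih hr⟩

lemma step_length {a b : PegPerm} (h : PegPrefRevStep a b) : b.length = a.length := by
  obtain ⟨j, hj, rfl⟩ := h
  exact length_pegSegReverse a j

lemma reach_length {k : ℕ} {a b : PegPerm} (h : ReachIn PegPrefRevStep k a b) :
    b.length = a.length := by
  induction k generalizing a with
  | zero => cases h; rfl
  | succ k ih =>
    obtain ⟨z, hz, hr⟩ := h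
    rw [ih hr, step_length hz]

lemma seg00 (p : ℕ × Deco) (t : PegPerm) :
    pegSegReverse (p :: t) 0 0 = flipE p :: t := by
  rw [pegSegReverse_eq]
  simp [revflip, flipE]

lemma flipDeco_ne_minus {e : Deco} (h : e ≠ Deco.plus) : flipDeco e ≠ Deco.minus := by
  cases e <;> simp [flipDeco] at * <;> tauto

lemma sortable_aux : ∀ (N : ℕ) (l : PegPerm), l.length ≤ N →
    (l.map Prod.fst).Perm (List.range' 1 l.length) →
    ∃ k m, IsIdPeg m ∧ ReachIn PegPrefRevStep k l m := by
  intro N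
  induction N with
  | zero =>
    intro l hl _
    have : l = [] := List.eq_nil_of_length_eq_zero (by omega)
    subst this
    exact ⟨0, [], ⟨rfl, by simp⟩, rfl⟩
  | succ N ih =>
    intro l hl hperm
    rcases Nat.eq_zero_or_pos l.length with h0 | hpos
    · have : l = [] := List.eq_nil_of_length_eq_zero h0
      subst this
      exact ⟨0, [], ⟨rfl, by simp⟩, rfl⟩
    · obtain ⟨p, hpl, hp1⟩ := List.mem_map.mp
        (hperm.mem_iff.mpr (by rw [List.mem_range'_1]; omega :
          l.length ∈ List.range' 1 l.length))
      obtain ⟨u, w, hluw⟩ := List.append_of_mem hpl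
      obtain ⟨pv, d⟩ := p
      simp only at hp1
      set n := l.length with hn
      have hlen : n = u.length + w.length + 1 := by rw [hn, hluw]; simp; omega
      subst hp1
      -- Step 1: bring max to the front
      have hstep1 : PegPrefRevStep l (((n, flipDeco d) :: revflip u) ++ w) := by
        refine ⟨u.length, by omega, ?_⟩
        have h1 : l = (u ++ [(n, d)]) ++ w := by rw [hluw]; simp
        rw [h1, pegSegReverse_prefix_of _ _ _ (by simp), revflip_concat]
        rfl
      set t₁ : PegPerm := revflip u ++ w with ht₁
      have hl₁ : ((n, flipDeco d) :: revflip u) ++ w = (n, flipDeco d) :: t₁ := by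
        simp [ht₁]
      rw [hl₁] at hstep1
      -- Step 2 (maybe): fix orientation so head decoration ≠ plus
      have key : ∃ (k₀ : ℕ) (e : Deco), e ≠ Deco.plus ∧
          ReachIn PegPrefRevStep k₀ l ((n, e) :: t₁) := by
        by_cases hd : flipDeco d = Deco.plus
        · refine ⟨2, Deco.minus, by simp, ?_⟩
          refine ⟨(n, flipDeco d) :: t₁, hstep1, ((n, Deco.minus) :: t₁), ?_, rfl⟩
          refine ⟨0, by simp, ?_⟩
          rw [seg00, hd]
          rfl
        · exact ⟨1, flipDeco d, hd, ⟨(n, flipDeco d) :: t₁, hstep1, rfl⟩⟩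
      obtain ⟨k₀, e, he, hreach₀⟩ := key
      -- Step 3: flip everything, putting max at the end with decoration ≠ minus
      have hstep3 : PegPrefRevStep ((n, e) :: t₁)
          (revflip t₁ ++ [(n, flipDeco e)]) := by
        refine ⟨t₁.length, by simp, ?_⟩
        have h1 : (n, e) :: t₁ = ((n, e) :: t₁) ++ [] := by simp
        rw [h1, pegSegReverse_prefix_of _ _ _ (by simp), revflip_cons]
        simp [flipE]
      set c : PegPerm := revflip t₁ with hc
      have hclen : c.length = n - 1 := by
        rw [hc, length_revflip, ht₁]
        simp [length_revflip]
        omega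
      -- the remaining list is a permutation of 1..n-1
      have hcperm : (c.map Prod.fst).Perm (List.range' 1 (n - 1)) := by
        have h1 : (c.map Prod.fst).Perm (u.map Prod.fst ++ w.map Prod.fst) := by
          rw [hc, map_fst_revflip, ht₁]
          refine (List.reverse_perm _).trans ?_
          simp only [List.map_append, map_fst_revflip]
          exact (List.reverse_perm _).append_right _
        have h2 : (l.map Prod.fst).Perm
            (n :: (u.map Prod.fst ++ w.map Prod.fst)) := by
          rw [hluw]
          simp only [List.map_append, List.map_cons]
          exact List.perm_middle
        have h3 : (List.range' 1 n).Perm (n :: List.range' 1 (n - 1)) := by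
          have : List.range' 1 n = List.range' 1 (n - 1) ++ [n] := by
            have h4 : n = (n - 1) + 1 := by omega
            rw [h4, List.range'_concat]
            have : 1 + (n - 1) = (n - 1) + 1 := by omega
            simp [this]
          rw [this]
          have := @List.perm_middle _ n (List.range' 1 (n - 1)) []
          simpa using this
        have h5 : (n :: (u.map Prod.fst ++ w.map Prod.fst)).Perm
            (n :: List.range' 1 (n - 1)) :=
          (h2.symm.trans hperm).trans h3
        exact h1.trans (List.Perm.cons_inv h5)
      obtain ⟨k', m', hm', hr'⟩ := ih c (by omega) (by rw [hclen]; exact hcperm)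
      have hlift : ReachIn PegPrefRevStep k' (c ++ [(n, flipDeco e)])
          (m' ++ [(n, flipDeco e)]) := reach_append _ hr'
      refine ⟨k₀ + (1 + k'), m' ++ [(n, flipDeco e)], ?_, ?_⟩
      · -- IsIdPeg
        obtain ⟨hmap', hdec'⟩ := hm'
        have hm'len : m'.length = n - 1 := by rw [reach_length hr', hclen]
        constructor
        · show (m' ++ [(n, flipDeco e)]).map Prod.fst =
            List.range' 1 (m' ++ [(n, flipDeco e)]).length
          rw [List.map_append]
          have : (m' ++ [(n, flipDeco e)]).length = (n - 1) + 1 := by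
            simp [hm'len]
          rw [this, List.range'_concat]
          rw [hmap', hm'len]
          simp only [List.map_cons, List.map_nil]
          congr 2
          omega
        · intro q hq
          rcases List.mem_append.mp hq with h | h
          · exact hdec' q h
          · simp only [List.mem_singleton] at h
            subst h
            exact flipDeco_ne_minus he
      · exact reach_trans hreach₀
          (reach_trans (⟨_, hstep3, rfl⟩ : ReachIn PegPrefRevStep 1 _ _) hlift)

end PrdAux
/-- a clean compact peg permutation of length `n` not ending with its
maximum value `n` has prefix reversal distance at least `n`. -/
theorem prd_lower_bound (πε : PegPerm) (n : ℕ) (hn : πε.length = n)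
    (h0 : IsPegPermList πε) (h1 : CleanCompact πε)
    (h2 : (πε.map Prod.fst).getLastD 0 ≠ n) :
    n ≤ pegPrd πε := by
  classical
  have hperm : (πε.map Prod.fst).Perm (List.range' 1 πε.length) := by
    have h := h0
    unfold IsPegPermList IsPermList idPerm at h
    simpa using h
  obtain ⟨k₀, m₀, hm₀, hr₀⟩ := PrdAux.sortable_aux πε.length πε le_rfl hperm
  unfold pegPrd
  apply le_csInf
  · exact ⟨k₀, m₀, hm₀, hr₀⟩
  rintro b ⟨m, hm, hr⟩
  have hb := PrdAux.reach_phi_le b πε m hr hm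
  have hbc := PrdAux.badCount_cleanCompact πε h1
  rcases List.eq_nil_or_concat πε with h | ⟨L, p, h⟩
  · subst h
    simp only [List.map_nil, List.getLastD_nil] at h2
    simp only [List.length_nil] at hn
    exact absurd hn h2
  · subst h
    simp only [List.concat_eq_append] at hn hbc hb h2 ⊢
    have hp1 : p.1 ≠ n := by
      have hgl : ((L ++ [p]).map Prod.fst).getLastD 0 = p.1 := by simp
      rwa [hgl] at h2
    have hend : PrdAux.endBad (L ++ [p]) = 1 := by
      unfold PrdAux.endBad
      rw [List.getLast?_concat]
      have hn' : L.length + 1 = n := by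
        simp only [List.length_append, List.length_cons, List.length_nil] at hn
        omega
      simp only [ne_eq, ite_eq_right_iff, List.length_append, List.length_cons,
        List.length_nil, Nat.zero_ne_one, imp_false, not_and, not_not]
      intro hcon
      exact absurd (show p.1 = n by omega) hp1
    have hlen1 : 1 ≤ (L ++ [p]).length := by simp
    unfold PrdAux.Phi at hb
    rw [hbc, hend] at hb
    omega
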